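/- Let Δ_1, …, Δ_r and ∇_1, …, ∇_r be dual to each other centered nef-partitions in ℝ^d, with Δ = Δ_1 + ⋯ + Δ_r and Δ* = {y ∈ ℝ^d : ⟨x,y⟩ ≥ −1 for all x ∈ Δ}. For a nonempty subset I ⊆ {1, …, r} set Δ^I := Σ_{i∈I} Δ_i (Minkowski sum) and ∇_I := Conv(∪_{i∈I} ∇_i). Then Δ^I = {x ∈ Δ : ⟨x,y⟩ ≥ 0 for all y ∈ ∇_j and all j ∉ I}, and ∇_I = {y ∈ Δ* : ⟨x,y⟩ ≥ 0 for all x ∈ Δ_j and all j ∉ I}. -/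

import Mathlib

open Pointwise

noncomputable section

/-- A point of `ℝ^n` all of whose coordinates are integers (a lattice point of `ℤ^n`). -/
def IsLatticePt {n : ℕ} (x : Fin n → ℝ) : Prop := ∀ k, ∃ m : ℤ, x k = (m : ℝ)

/-- A lattice polytope: the convex hull of finitely many lattice points. -/
def IsLatticePoly {n : ℕ} (P : Set (Fin n → ℝ)) : Prop :=
  ∃ V : Finset (Fin n → ℝ), V.Nonempty ∧ (∀ v ∈ V, IsLatticePt v) ∧
    P = convexHull ℝ (V : Set (Fin n → ℝ))

/-- The standard inner product pairing on `ℝ^n`. -/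
def pairR {n : ℕ} (x y : Fin n → ℝ) : ℝ := ∑ k, x k * y k

/-- The dual polytope `P* = {y : ⟨x,y⟩ ≥ -1 ∀ x ∈ P}`. -/
def dualPoly {n : ℕ} (P : Set (Fin n → ℝ)) : Set (Fin n → ℝ) :=
  {y | ∀ x ∈ P, -1 ≤ pairR x y}

/-- A reflexive polytope: a lattice polytope with `0` in its interior whose dual
polytope is again a lattice polytope. -/
def IsReflexivePoly {n : ℕ} (P : Set (Fin n → ℝ)) : Prop :=
  IsLatticePoly P ∧ (0 : Fin n → ℝ) ∈ interior P ∧ IsLatticePoly (dualPoly P)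

/-- The dimension of a polytope: the dimension of the direction of its affine span. -/
def polyDim {n : ℕ} (P : Set (Fin n → ℝ)) : ℕ :=
  Module.finrank ℝ (affineSpan ℝ P).direction

/-- A (full-dimensional) Gorenstein polytope of index `r`: `rP` has `m` as its unique
interior lattice point and `rP - m` is reflexive. -/
def IsGorensteinPoly {n : ℕ} (P : Set (Fin n → ℝ)) (r : ℕ) (m : Fin n → ℝ) : Prop :=
  IsLatticePoly P ∧ IsLatticePt m ∧
  (∀ x, IsLatticePt x → (x ∈ interior ((r : ℝ) • P) ↔ x = m)) ∧
  IsReflexivePoly ((fun x => x - m) '' ((r : ℝ) • P))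

/-- `y` is a point of the lattice dual to the (saturated) lattice `ℤ^n ∩ W` inside `W`. -/
def IsDualLatticePt {n : ℕ} (W : Submodule ℝ (Fin n → ℝ)) (y : Fin n → ℝ) : Prop :=
  y ∈ W ∧ ∀ x ∈ W, IsLatticePt x → ∃ m : ℤ, pairR x y = (m : ℝ)

/-- Reflexivity of a (possibly lower-dimensional) lattice polytope inside its linear
span: `0` is in the relative interior and the dual polytope taken inside the linear
span is a lattice polytope with respect to the dual lattice. -/
def IsReflexiveIn {n : ℕ} (P : Set (Fin n → ℝ)) : Prop :=
  IsLatticePoly P ∧ (0 : Fin n → ℝ) ∈ intrinsicInterior ℝ P ∧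
  ∃ V : Finset (Fin n → ℝ), V.Nonempty ∧
    (∀ v ∈ V, IsDualLatticePt (Submodule.span ℝ P) v) ∧
    {y | y ∈ Submodule.span ℝ P ∧ ∀ x ∈ P, -1 ≤ pairR x y} =
      convexHull ℝ (V : Set (Fin n → ℝ))

/-- Gorenstein polytope of index `r` (possibly lower-dimensional): `rP` has `m` as its
unique relative-interior lattice point and `rP - m` is reflexive within its span. -/
def IsGorensteinIn {n : ℕ} (P : Set (Fin n → ℝ)) (r : ℕ) (m : Fin n → ℝ) : Prop :=
  IsLatticePoly P ∧ IsLatticePt m ∧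
  (∀ x, IsLatticePt x → (x ∈ intrinsicInterior ℝ ((r : ℝ) • P) ↔ x = m)) ∧
  IsReflexiveIn ((fun x => x - m) '' ((r : ℝ) • P))

/-- The Minkowski sum `Δ 0 + ⋯ + Δ (r-1)` of a family of sets. -/
def minkSum {n r : ℕ} (Δ : Fin r → Set (Fin n → ℝ)) : Set (Fin n → ℝ) :=
  {x | ∃ f : Fin r → (Fin n → ℝ), (∀ i, f i ∈ Δ i) ∧ x = ∑ i, f i}

/-- The Minkowski sum `Σ_{i ∈ I} Δ i`. -/
def minkSumOver {n r : ℕ} (I : Finset (Fin r)) (Δ : Fin r → Set (Fin n → ℝ)) :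
    Set (Fin n → ℝ) :=
  {x | ∃ f : Fin r → (Fin n → ℝ), (∀ i ∈ I, f i ∈ Δ i) ∧ x = ∑ i ∈ I, f i}

/-- The point `x × e_i ∈ ℝ^d × ℝ^r`. -/
def cayleyPt {d r : ℕ} (x : Fin d → ℝ) (i : Fin r) : Fin (d + r) → ℝ :=
  Fin.append x (fun j => if j = i then 1 else 0)

/-- The Cayley polytope `Δ 0 * ⋯ * Δ (r-1) ⊂ ℝ^d × ℝ^r`. -/
def cayley {d r : ℕ} (Δ : Fin r → Set (Fin d → ℝ)) : Set (Fin (d + r) → ℝ) :=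
  convexHull ℝ (⋃ i, (fun x => cayleyPt x i) '' Δ i)

/-- `F` is a facet of `P`: a nonempty exposed face of dimension one less. -/
def IsFacetOf {n : ℕ} (F P : Set (Fin n → ℝ)) : Prop :=
  IsExposed ℝ P F ∧ F.Nonempty ∧ polyDim F + 1 = polyDim P

/-- A special `(r-1)`-simplex of `P`: `r` affinely independent lattice points of `P`
such that every facet of `P` contains exactly `r - 1` of them. -/
def IsSpecialSimplex {n : ℕ} (P : Set (Fin n → ℝ)) (r : ℕ) (v : Fin r → Fin n → ℝ) : Prop :=
  (∀ i, IsLatticePt (v i) ∧ v i ∈ P) ∧ AffineIndependent ℝ v ∧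
  ∀ F, IsFacetOf F P → ∃! i, v i ∉ F

/-- `∇_i = {y : ⟨x,y⟩ ≥ -δ_{ij} ∀ x ∈ Δ_j ∀ j}`, the polytopes of the dual nef-partition. -/
def nefDual {d r : ℕ} (Δ : Fin r → Set (Fin d → ℝ)) (i : Fin r) : Set (Fin d → ℝ) :=
  {y | ∀ j, ∀ x ∈ Δ j, -(if i = j then (1 : ℝ) else 0) ≤ pairR x y}

/-- A centered nef-partition: lattice polytopes containing `0` whose Minkowski sum is a
reflexive polytope with `0` as its unique interior lattice point. -/
def IsCenteredNefPartition {d r : ℕ} (Δ : Fin r → Set (Fin d → ℝ)) : Prop :=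
  (∀ i, IsLatticePoly (Δ i) ∧ (0 : Fin d → ℝ) ∈ Δ i) ∧
  IsReflexivePoly (minkSum Δ) ∧
  ∀ x, IsLatticePt x → x ∈ interior (minkSum Δ) → x = 0

/-- Two centered nef-partitions dual to each other. -/
def AreDualNefPartitions {d r : ℕ} (Δ Nb : Fin r → Set (Fin d → ℝ)) : Prop :=
  IsCenteredNefPartition Δ ∧ IsCenteredNefPartition Nb ∧
  (∀ i, Nb i = nefDual Δ i) ∧ (∀ i, Δ i = nefDual Nb i)

/-- A Gorenstein cone with its distinguished lattice point `nσ`: a full-dimensional cone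
generated by finitely many lattice points on the hyperplane `⟨·, nσ⟩ = 1`. -/
def IsGorensteinCone {n : ℕ} (σ : Set (Fin n → ℝ)) (nσ : Fin n → ℝ) : Prop :=
  IsLatticePt nσ ∧ Submodule.span ℝ σ = ⊤ ∧
  ∃ V : Finset (Fin n → ℝ), V.Nonempty ∧
    (∀ v ∈ V, IsLatticePt v ∧ pairR v nσ = 1) ∧
    σ = {x | ∃ c : (Fin n → ℝ) → ℝ, (∀ v, 0 ≤ c v) ∧ x = ∑ v ∈ V, c v • v}

/-- The dual cone. -/
def dualCone {n : ℕ} (σ : Set (Fin n → ℝ)) : Set (Fin n → ℝ) :=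
  {y | ∀ x ∈ σ, 0 ≤ pairR x y}

/-- Integrally closed lattice polytope: every lattice point of `k • P` is a sum of `k`
lattice points of `P`. -/
def IntegrallyClosed {n : ℕ} (P : Set (Fin n → ℝ)) : Prop :=
  ∀ (k : ℕ) (x : Fin n → ℝ), IsLatticePt x → x ∈ (k : ℝ) • P →
    ∃ v : Fin k → (Fin n → ℝ), (∀ j, IsLatticePt (v j) ∧ v j ∈ P) ∧ x = ∑ j, v j

/-!
The pairing with a lattice point `η ∈ Δ*` is integral on the vertices of every `Δ_k`, and two
summands on which it is negative would give a point of `Δ` where it is at most `-2`; hence `η`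
lies in some `∇_k`, and `Δ* ⊆ conv (⋃ ∇_k)`. Scaling `y` into the boundary of `Δ*` then writes
every `y` as `∑ t_k z_k` with `z_k ∈ ∇_k` and `-t_k = min_{Δ_k} ⟨·, y⟩`. Applied to `∇` and to
`Δ` this gives both descriptions: on their right-hand sides `t_j = 0` for `j ∉ I`, while
`t_k ≤ 1` for `x ∈ Δ` and `∑ t_k ≤ 1` for `y ∈ Δ*`.
-/

section Pairing

variable {n : ℕ}

theorem pairR_eq_dotProduct (x y : Fin n → ℝ) : pairR x y = x ⬝ᵥ y := rfl

theorem pairR_comm (x y : Fin n → ℝ) : pairR x y = pairR y x := dotProduct_comm x y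

theorem pairR_add_left (x x' y : Fin n → ℝ) : pairR (x + x') y = pairR x y + pairR x' y :=
  add_dotProduct x x' y

theorem pairR_sum_left {ι : Type*} (s : Finset ι) (f : ι → Fin n → ℝ) (y : Fin n → ℝ) :
    pairR (∑ i ∈ s, f i) y = ∑ i ∈ s, pairR (f i) y :=
  sum_dotProduct s f y

theorem pairR_sum_smul_right {ι : Type*} (s : Finset ι) (t : ι → ℝ) (x : Fin n → ℝ)
    (z : ι → Fin n → ℝ) : pairR x (∑ i ∈ s, t i • z i) = ∑ i ∈ s, t i * pairR x (z i) := by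
  simp only [pairR_eq_dotProduct, dotProduct_sum, dotProduct_smul, smul_eq_mul]

theorem le_pairR_smul_add_smul {x y₁ y₂ : Fin n → ℝ} {a b c : ℝ} (h₁ : c ≤ pairR x y₁)
    (h₂ : c ≤ pairR x y₂) (ha : 0 ≤ a) (hb : 0 ≤ b) (hab : a + b = 1) :
    c ≤ pairR x (a • y₁ + b • y₂) := by
  simp only [pairR_eq_dotProduct, dotProduct_add, dotProduct_smul, smul_eq_mul] at *
  calc c = a * c + b * c := by rw [← add_mul, hab, one_mul]
    _ ≤ _ := add_le_add (mul_le_mul_of_nonneg_left h₁ ha) (mul_le_mul_of_nonneg_left h₂ hb)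

theorem isLinearMap_pairR_left (y : Fin n → ℝ) : IsLinearMap ℝ (pairR · y) :=
  ⟨fun x x' => add_dotProduct x x' y, fun c x => smul_dotProduct c x y⟩

theorem continuous_pairR_left (y : Fin n → ℝ) : Continuous (pairR · y) := by
  unfold pairR
  fun_prop

theorem IsLatticePt.exists_pairR_eq_intCast {x y : Fin n → ℝ} (hx : IsLatticePt x)
    (hy : IsLatticePt y) : ∃ m : ℤ, pairR x y = m := by
  choose a ha using hx
  choose b hb using hy
  exact ⟨∑ k, a k * b k, by simp [pairR, ha, hb]⟩

end Pairing

section Polytopes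

variable {n : ℕ} {P : Set (Fin n → ℝ)}

theorem IsLatticePoly.convex (hP : IsLatticePoly P) : Convex ℝ P := by
  obtain ⟨V, -, -, rfl⟩ := hP
  exact convex_convexHull ℝ _

theorem IsLatticePoly.exists_isMinOn_pairR (hP : IsLatticePoly P) (y : Fin n → ℝ) :
    ∃ x ∈ P, IsMinOn (pairR · y) P x := by
  obtain ⟨V, hV, -, rfl⟩ := hP
  exact (V.finite_toSet.isCompact_convexHull ℝ).exists_isMinOn
    ((convexHull_nonempty_iff (𝕜 := ℝ)).2 (Finset.coe_nonempty.2 hV))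
    (continuous_pairR_left y).continuousOn

theorem IsLatticePoly.exists_pairR_le_neg_one (hP : IsLatticePoly P) {η : Fin n → ℝ}
    (hη : IsLatticePt η) (hneg : ∃ x ∈ P, pairR x η < 0) : ∃ v ∈ P, pairR v η ≤ -1 := by
  obtain ⟨V, -, hV, rfl⟩ := hP
  obtain ⟨x, hx, hxη⟩ := hneg
  obtain ⟨v, hv, hvη⟩ : ∃ v ∈ V, pairR v η < 0 := by
    by_contra! hV
    exact hxη.not_ge
      (convexHull_min hV (convex_halfSpace_ge (isLinearMap_pairR_left η) 0) hx)
  obtain ⟨m, hvm⟩ := (hV v hv).exists_pairR_eq_intCast hη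
  have hm : m ≤ -1 := by
    rw [hvm] at hvη
    exact Int.le_sub_one_of_lt (by exact_mod_cast hvη)
  exact ⟨v, subset_convexHull ℝ _ hv, by rw [hvm]; exact_mod_cast hm⟩

theorem eq_zero_of_forall_pairR_nonneg (h0 : (0 : Fin n → ℝ) ∈ interior P)
    {y : Fin n → ℝ} (hy : ∀ x ∈ P, 0 ≤ pairR x y) : y = 0 := by
  have hnear : ∀ᶠ t in nhdsWithin (0 : ℝ) (Set.Ioi 0), (-t) • y ∈ P := by
    have hcont : Continuous fun t : ℝ => (-t) • y := by fun_prop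
    have hlim : Filter.Tendsto (fun t : ℝ => (-t) • y) (nhds 0) (nhds 0) := by
      simpa using hcont.tendsto 0
    exact (hlim.eventually (mem_interior_iff_mem_nhds.mp h0)).filter_mono nhdsWithin_le_nhds
  obtain ⟨t, htP, ht⟩ := (hnear.and self_mem_nhdsWithin).exists
  have hyy : 0 ≤ y ⬝ᵥ y := by simpa using dotProduct_star_self_nonneg y
  have hty := hy _ htP
  rw [pairR_eq_dotProduct, neg_smul, neg_dotProduct, smul_dotProduct, smul_eq_mul] at hty
  exact dotProduct_self_eq_zero.mp (le_antisymm (by nlinarith [ht]) hyy)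

theorem exists_eq_smul_mem_dualPoly (h0 : (0 : Fin n → ℝ) ∈ interior P) {c : ℝ} (hc : 0 ≤ c)
    {y : Fin n → ℝ} (hy : ∀ x ∈ P, -c ≤ pairR x y) : ∃ w ∈ dualPoly P, y = c • w := by
  rcases hc.eq_or_lt with rfl | hc
  · refine ⟨0, fun x _ => by simp [pairR_eq_dotProduct], ?_⟩
    simpa using eq_zero_of_forall_pairR_nonneg h0 (by simpa using hy)
  · refine ⟨c⁻¹ • y, fun x hx => ?_, (smul_inv_smul₀ hc.ne' y).symm⟩
    rw [pairR_eq_dotProduct, dotProduct_smul, smul_eq_mul, ← pairR_eq_dotProduct]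
    have := mul_le_mul_of_nonneg_left (hy x hx) (inv_nonneg.mpr hc.le)
    rwa [mul_neg, inv_mul_cancel₀ hc.ne'] at this

end Polytopes

section Convexity

variable {ι E : Type*} [AddCommGroup E] [Module ℝ E]

theorem Convex.sum_smul_mem_of_sum_le_one {K : Set E} (hK : Convex ℝ K) (h0 : (0 : E) ∈ K)
    {s : Finset ι} {t : ι → ℝ} {z : ι → E} (ht : ∀ i ∈ s, 0 ≤ t i) (hsum : ∑ i ∈ s, t i ≤ 1)
    (hz : ∀ i ∈ s, z i ∈ K) : ∑ i ∈ s, t i • z i ∈ K := by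
  rcases (Finset.sum_nonneg ht).eq_or_lt with hT | hT
  · rwa [Finset.sum_eq_zero fun i hi => by
      rw [(Finset.sum_eq_zero_iff_of_nonneg ht).1 hT.symm i hi, zero_smul]]
  · have := hK.smul_mem_of_zero_mem h0 (hK.centerMass_mem ht hT hz) ⟨hT.le, hsum⟩
    rwa [Finset.centerMass, smul_inv_smul₀ hT.ne'] at this

theorem exists_sum_smul_of_mem_convexHull_iUnion [Fintype ι] {C : ι → Set E}
    (hC : ∀ i, Convex ℝ (C i)) (hne : ∀ i, (C i).Nonempty) {y : E}
    (hy : y ∈ convexHull ℝ (⋃ i, C i)) :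
    ∃ (t : ι → ℝ) (z : ι → E), (∀ i, 0 ≤ t i) ∧ ∑ i, t i ≤ 1 ∧ (∀ i, z i ∈ C i) ∧
      y = ∑ i, t i • z i := by
  classical
  suffices hsub : convexHull ℝ (⋃ i, C i) ⊆ {y | ∃ (t : ι → ℝ) (z : ι → E), (∀ i, 0 ≤ t i) ∧
      ∑ i, t i ≤ 1 ∧ (∀ i, z i ∈ C i) ∧ y = ∑ i, t i • z i} from hsub hy
  refine convexHull_min ?_ ?_
  · rintro x ⟨_, ⟨k, rfl⟩, hx⟩
    refine ⟨Pi.single k 1, Function.update (fun i => (hne i).some) k x, fun i => ?_, by simp,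
      fun i => ?_, ?_⟩
    · by_cases hi : i = k <;> simp [hi]
    · by_cases hi : i = k
      · subst hi
        simpa using hx
      · simpa [hi] using (hne i).some_mem
    · rw [Fintype.sum_eq_single k fun i hi => by simp [hi]]
      simp
  · rintro _ ⟨t, z, ht, ht1, hz, rfl⟩ _ ⟨t', z', ht', ht1', hz', rfl⟩ a b ha hb hab
    have hmix : ∀ i, ∃ w ∈ C i, a • t i • z i + b • t' i • z' i = (a * t i + b * t' i) • w := by
      intro i
      have hmem : (a * t i) • z i + (b * t' i) • z' i ∈ (a * t i + b * t' i) • C i := by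
        rw [(hC i).add_smul (mul_nonneg ha (ht i)) (mul_nonneg hb (ht' i))]
        exact Set.add_mem_add (Set.smul_mem_smul_set (hz i)) (Set.smul_mem_smul_set (hz' i))
      obtain ⟨w, hw, hweq⟩ := hmem
      exact ⟨w, hw, by rw [smul_smul, smul_smul]; exact hweq.symm⟩
    choose w hw hweq using hmix
    refine ⟨fun i => a * t i + b * t' i, w, fun i => by have := ht i; have := ht' i; positivity,
      ?_, hw, ?_⟩
    · rw [Finset.sum_add_distrib, ← Finset.mul_sum, ← Finset.mul_sum]
      nlinarith
    · simp only [Finset.smul_sum, ← Finset.sum_add_distrib, hweq]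

end Convexity

section NefPartition

variable {d r : ℕ} {Δ : Fin r → Set (Fin d → ℝ)}

theorem minkSumOver_subset_minkSum (h0 : ∀ k, (0 : Fin d → ℝ) ∈ Δ k) (I : Finset (Fin r)) :
    minkSumOver I Δ ⊆ minkSum Δ := by
  classical
  rintro _ ⟨f, hf, rfl⟩
  refine ⟨fun k => if k ∈ I then f k else 0, fun k => ?_, ?_⟩
  · by_cases hk : k ∈ I <;> simp [hk, hf, h0]
  · rw [Finset.sum_ite_mem, Finset.univ_inter]

theorem mem_minkSum_of_mem (h0 : ∀ k, (0 : Fin d → ℝ) ∈ Δ k) {k : Fin r} {x : Fin d → ℝ}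
    (hx : x ∈ Δ k) : x ∈ minkSum Δ :=
  minkSumOver_subset_minkSum h0 {k} ⟨fun _ => x, by simpa using hx, by simp⟩

theorem add_mem_minkSum (h0 : ∀ k, (0 : Fin d → ℝ) ∈ Δ k) {j k : Fin r} (hjk : j ≠ k)
    {x y : Fin d → ℝ} (hx : x ∈ Δ j) (hy : y ∈ Δ k) : x + y ∈ minkSum Δ := by
  classical
  refine minkSumOver_subset_minkSum h0 {j, k} ⟨fun i => if i = j then x else y, ?_, ?_⟩
  · simp only [Finset.mem_insert, Finset.mem_singleton]
    rintro i (rfl | rfl)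
    · simpa using hx
    · simpa [hjk.symm] using hy
  · simp [Finset.sum_pair hjk, hjk.symm]

theorem zero_mem_nefDual (Δ : Fin r → Set (Fin d → ℝ)) (i : Fin r) :
    (0 : Fin d → ℝ) ∈ nefDual Δ i := by
  intro j x _
  simp only [pairR_eq_dotProduct, dotProduct_zero, neg_nonpos]
  split_ifs <;> norm_num

theorem convex_nefDual (Δ : Fin r → Set (Fin d → ℝ)) (i : Fin r) : Convex ℝ (nefDual Δ i) := by
  intro y₁ h₁ y₂ h₂ a b ha hb hab j x hx
  exact le_pairR_smul_add_smul (h₁ j x hx) (h₂ j x hx) ha hb hab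

theorem pairR_nonneg_of_mem_nefDual {i j : Fin r} (hij : i ≠ j) {x y : Fin d → ℝ}
    (hy : y ∈ nefDual Δ i) (hx : x ∈ Δ j) : 0 ≤ pairR x y := by
  simpa [hij] using hy j x hx

theorem nefDual_subset_dualPoly_minkSum (i : Fin r) : nefDual Δ i ⊆ dualPoly (minkSum Δ) := by
  rintro y hy _ ⟨f, hf, rfl⟩
  rw [pairR_sum_left]
  calc (-1 : ℝ) = ∑ k, -(if i = k then 1 else 0) := by simp
    _ ≤ ∑ k, pairR (f k) y := Finset.sum_le_sum fun k _ => hy k (f k) (hf k)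

theorem neg_le_pairR_sum_smul_of_mem_nefDual {k : Fin r} {x : Fin d → ℝ} (hx : x ∈ Δ k)
    {t : Fin r → ℝ} (ht : ∀ j, 0 ≤ t j) {z : Fin r → Fin d → ℝ}
    (hz : ∀ j, z j ∈ nefDual Δ j) : -t k ≤ pairR x (∑ j, t j • z j) := by
  rw [pairR_sum_smul_right]
  calc -t k = ∑ j, t j * -(if j = k then 1 else 0) := by simp
    _ ≤ ∑ j, t j * pairR x (z j) :=
      Finset.sum_le_sum fun j _ => mul_le_mul_of_nonneg_left (hz j k x hx) (ht j)

theorem exists_mem_nefDual_of_isLatticePt [Nonempty (Fin r)]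
    (hΔ : ∀ k, IsLatticePoly (Δ k) ∧ (0 : Fin d → ℝ) ∈ Δ k) {η : Fin d → ℝ}
    (hη : IsLatticePt η) (hηΔ : η ∈ dualPoly (minkSum Δ)) : ∃ k, η ∈ nefDual Δ k := by
  have h0 k := (hΔ k).2
  have hpair : ∀ j k, j ≠ k →
      (∀ x ∈ Δ j, 0 ≤ pairR x η) ∨ ∀ x ∈ Δ k, 0 ≤ pairR x η := by
    intro j k hjk
    by_contra! ⟨hj, hk⟩
    obtain ⟨v, hv, hvη⟩ := (hΔ j).1.exists_pairR_le_neg_one hη hj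
    obtain ⟨w, hw, hwη⟩ := (hΔ k).1.exists_pairR_le_neg_one hη hk
    have := hηΔ _ (add_mem_minkSum h0 hjk hv hw)
    rw [pairR_add_left] at this
    linarith
  obtain ⟨k, hk⟩ : ∃ k, ∀ j ≠ k, ∀ x ∈ Δ j, 0 ≤ pairR x η := by
    by_contra! hneg
    obtain ⟨j, -, hj⟩ := hneg (Classical.arbitrary _)
    obtain ⟨j', hj'j, hj'⟩ := hneg j
    rcases hpair j' j hj'j with h | h
    · obtain ⟨x, hx, hxη⟩ := hj'
      exact (h x hx).not_gt hxη
    · obtain ⟨x, hx, hxη⟩ := hj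
      exact (h x hx).not_gt hxη
  refine ⟨k, fun j x hx => ?_⟩
  rcases eq_or_ne k j with rfl | hkj
  · simpa using hηΔ x (mem_minkSum_of_mem h0 hx)
  · simpa [hkj] using hk j (Ne.symm hkj) x hx

theorem dualPoly_minkSum_subset_convexHull_iUnion_nefDual [Nonempty (Fin r)]
    (hΔ : ∀ k, IsLatticePoly (Δ k) ∧ (0 : Fin d → ℝ) ∈ Δ k)
    (hdual : IsLatticePoly (dualPoly (minkSum Δ))) :
    dualPoly (minkSum Δ) ⊆ convexHull ℝ (⋃ k, nefDual Δ k) := by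
  obtain ⟨W, -, hW, hWeq⟩ := hdual
  have hWΔ : (W : Set (Fin d → ℝ)) ⊆ dualPoly (minkSum Δ) := hWeq ▸ subset_convexHull ℝ _
  rw [hWeq]
  exact convexHull_mono fun η hη =>
    Set.mem_iUnion.2 (exists_mem_nefDual_of_isLatticePt hΔ (hW η hη) (hWΔ hη))

theorem exists_sum_smul_nefDual [Nonempty (Fin r)]
    (hΔ : ∀ k, IsLatticePoly (Δ k) ∧ (0 : Fin d → ℝ) ∈ Δ k)
    (h0 : (0 : Fin d → ℝ) ∈ interior (minkSum Δ))
    (hdual : IsLatticePoly (dualPoly (minkSum Δ))) (y : Fin d → ℝ) :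
    ∃ (t : Fin r → ℝ) (z x : Fin r → Fin d → ℝ), (∀ k, 0 ≤ t k) ∧
      (∀ k, z k ∈ nefDual Δ k) ∧ y = ∑ k, t k • z k ∧
      ∀ k, x k ∈ Δ k ∧ pairR (x k) y = -t k := by
  choose x hxΔ hxmin using fun k => (hΔ k).1.exists_isMinOn_pairR y
  set c := -∑ k, pairR (x k) y
  have hc : 0 ≤ c := by
    refine neg_nonneg.2 (Finset.sum_nonpos fun k _ => ?_)
    simpa [pairR_eq_dotProduct] using isMinOn_iff.1 (hxmin k) 0 (hΔ k).2
  have hlow : ∀ p ∈ minkSum Δ, -c ≤ pairR p y := by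
    rintro _ ⟨f, hf, rfl⟩
    rw [neg_neg, pairR_sum_left]
    exact Finset.sum_le_sum fun k _ => isMinOn_iff.1 (hxmin k) (f k) (hf k)
  obtain ⟨w, hw, hyw⟩ := exists_eq_smul_mem_dualPoly h0 hc hlow
  obtain ⟨s, z, hs, hs1, hz, rfl⟩ :=
    exists_sum_smul_of_mem_convexHull_iUnion (convex_nefDual Δ)
      (fun k => ⟨0, zero_mem_nefDual Δ k⟩)
      (dualPoly_minkSum_subset_convexHull_iUnion_nefDual hΔ hdual hw)
  have hy : y = ∑ k, (c * s k) • z k := by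
    simp only [hyw, Finset.smul_sum, smul_smul]
  have hge k : -(c * s k) ≤ pairR (x k) y :=
    hy ▸ neg_le_pairR_sum_smul_of_mem_nefDual (hxΔ k) (fun j => mul_nonneg hc (hs j)) hz
  have hle : ∑ k, pairR (x k) y ≤ ∑ k, -(c * s k) := by
    rw [Finset.sum_neg_distrib, ← Finset.mul_sum, ← neg_neg (∑ k, pairR (x k) y)]
    exact neg_le_neg (mul_le_of_le_one_right hc hs1)
  refine ⟨fun k => c * s k, z, x, fun k => mul_nonneg hc (hs k), hz, hy,
    fun k => ⟨hxΔ k, ?_⟩⟩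
  exact ((Finset.sum_eq_sum_iff_of_le fun k _ => hge k).1
    (le_antisymm (Finset.sum_le_sum fun k _ => hge k) hle) k (Finset.mem_univ k)).symm

theorem convexHull_biUnion_nefDual_eq
    (hΔ : ∀ k, IsLatticePoly (Δ k) ∧ (0 : Fin d → ℝ) ∈ Δ k)
    (h0 : (0 : Fin d → ℝ) ∈ interior (minkSum Δ))
    (hdual : IsLatticePoly (dualPoly (minkSum Δ))) {I : Finset (Fin r)} {i₀ : Fin r}
    (hi₀ : i₀ ∈ I) :
    convexHull ℝ (⋃ i ∈ I, nefDual Δ i) =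
      {y ∈ dualPoly (minkSum Δ) | ∀ j ∉ I, ∀ x ∈ Δ j, 0 ≤ pairR x y} := by
  have : Nonempty (Fin r) := ⟨i₀⟩
  apply subset_antisymm
  · refine convexHull_min (Set.iUnion₂_subset fun i hi y hy =>
      ⟨nefDual_subset_dualPoly_minkSum i hy,
        fun j hj x hx => pairR_nonneg_of_mem_nefDual (ne_of_mem_of_not_mem hi hj) hy hx⟩) ?_
    rintro y₁ ⟨h₁, h₁'⟩ y₂ ⟨h₂, h₂'⟩ a b ha hb hab
    exact ⟨fun x hx => le_pairR_smul_add_smul (h₁ x hx) (h₂ x hx) ha hb hab,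
      fun j hj x hx => le_pairR_smul_add_smul (h₁' j hj x hx) (h₂' j hj x hx) ha hb hab⟩
  · rintro y ⟨hyΔ, hyI⟩
    obtain ⟨t, z, x, ht, hz, rfl, hx⟩ := exists_sum_smul_nefDual hΔ h0 hdual y
    have htI : ∀ j ∉ I, t j = 0 := fun j hj =>
      le_antisymm (by linarith [(hx j).2, hyI j hj (x j) (hx j).1]) (ht j)
    have hsum : ∑ k, t k • z k = ∑ i ∈ I, t i • z i :=
      (Finset.sum_subset I.subset_univ fun k _ hk => by rw [htI k hk, zero_smul]).symm
    have ht1 : ∑ i ∈ I, t i ≤ 1 := by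
      have := hyΔ (∑ k, x k) ⟨x, fun k => (hx k).1, rfl⟩
      rw [pairR_sum_left, Finset.sum_congr rfl fun k _ => (hx k).2,
        Finset.sum_neg_distrib] at this
      rw [Finset.sum_subset I.subset_univ fun k _ hk => htI k hk]
      linarith
    rw [hsum]
    exact (convex_convexHull ℝ _).sum_smul_mem_of_sum_le_one
      (subset_convexHull ℝ _ (Set.mem_biUnion hi₀ (zero_mem_nefDual Δ i₀))) (fun i _ => ht i)
      ht1 fun i hi => subset_convexHull ℝ _ (Set.mem_biUnion hi (hz i))

end NefPartition

theorem minkSumOver_eq_of_areDualNefPartitions {d r : ℕ} [Nonempty (Fin r)]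
    {Δ Nb : Fin r → Set (Fin d → ℝ)} (h : AreDualNefPartitions Δ Nb) (I : Finset (Fin r)) :
    minkSumOver I Δ = {x ∈ minkSum Δ | ∀ j ∉ I, ∀ y ∈ Nb j, 0 ≤ pairR x y} := by
  obtain ⟨⟨hΔ, -⟩, ⟨hNb, ⟨-, h0, hdual⟩, -⟩, hNbΔ, hΔNb⟩ := h
  apply subset_antisymm
  · rintro _ ⟨f, hf, rfl⟩
    refine ⟨minkSumOver_subset_minkSum (fun k => (hΔ k).2) I ⟨f, hf, rfl⟩, fun j hj y hy => ?_⟩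
    rw [pairR_sum_left]
    exact Finset.sum_nonneg fun i hi =>
      pairR_nonneg_of_mem_nefDual (ne_of_mem_of_not_mem hi hj).symm (hNbΔ j ▸ hy) (hf i hi)
  · rintro x ⟨hxΔ, hxI⟩
    obtain ⟨t, u, z, ht, hu, rfl, hz⟩ := exists_sum_smul_nefDual hNb h0 hdual x
    have htI : ∀ j ∉ I, t j = 0 := fun j hj => le_antisymm
      (by linarith [(hz j).2, pairR_comm (z j) (∑ k, t k • u k), hxI j hj (z j) (hz j).1]) (ht j)
    have ht1 k : t k ≤ 1 := by
      have := nefDual_subset_dualPoly_minkSum k (hNbΔ k ▸ (hz k).1) _ hxΔ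
      linarith [(hz k).2, pairR_comm (z k) (∑ k, t k • u k)]
    refine ⟨fun k => t k • u k, fun i _ => (hΔ i).1.convex.smul_mem_of_zero_mem (hΔ i).2
      (hΔNb i ▸ hu i) ⟨ht i, ht1 i⟩, ?_⟩
    exact (Finset.sum_subset I.subset_univ fun k _ hk => by rw [htI k hk, zero_smul]).symm

/-- For dual centered nef-partitions and a nonempty `I ⊆ {1, …, r}`:
`Δ^I = {x ∈ Δ : ⟨x,y⟩ ≥ 0 ∀ y ∈ ∇_j, j ∉ I}` and
`∇_I = {y ∈ Δ* : ⟨x,y⟩ ≥ 0 ∀ x ∈ Δ_j, j ∉ I}`. -/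
theorem nef_partition_support_description {d r : ℕ}
    (Δ Nb : Fin r → Set (Fin d → ℝ))
    (h : AreDualNefPartitions Δ Nb)
    (I : Finset (Fin r)) (hI : I.Nonempty) :
    minkSumOver I Δ =
      {x ∈ minkSum Δ | ∀ j ∉ I, ∀ y ∈ Nb j, 0 ≤ pairR x y} ∧
    convexHull ℝ (⋃ i ∈ I, Nb i) =
      {y ∈ dualPoly (minkSum Δ) | ∀ j ∉ I, ∀ x ∈ Δ j, 0 ≤ pairR x y} := by
  obtain ⟨i₀, hi₀⟩ := hI
  have : Nonempty (Fin r) := ⟨i₀⟩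
  refine ⟨minkSumOver_eq_of_areDualNefPartitions h I, ?_⟩
  obtain ⟨⟨hΔ, ⟨-, h0, hdual⟩, -⟩, -, hNb, -⟩ := h
  obtain rfl : Nb = nefDual Δ := funext hNb
  exact convexHull_biUnion_nefDual_eq hΔ h0 hdual hi₀
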